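/- Let σ ∈ Λ²₊V be a unit vector and V′ ∈ Λ²₊V with ⟨V′,σ⟩ = 0. Then for all X, Y ∈ V: ⟨σ×V′, X∧(K_σY)⟩ = ⟨σ×V′, (K_σX)∧Y⟩ = ⟨V′, X∧Y⟩ (identity (5) of the paper). -/

import Mathlib

/-!
Fix a positively oriented orthonormal basis `e₀, …, e₃` of `V`. The six `eᵢ ∧ eⱼ` (`i < j`) are
orthogonal of squared norm `1/2` and span `Λ²V`, so, using `⋆`, every self-dual element is
`∑ aₖ sₖ` for the frame `s₁, s₂, s₃`, and on such elements `×` is the cross product of the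
coefficient vectors. For `σ = ∑ aₖ sₖ` both `2 ⟪σ, eᵢ ∧ eⱼ⟫` and `⟪K_σ eᵢ, eⱼ⟫` are the entries of
an explicit antisymmetric matrix `M(a)`, and these matrices obey the quaternion relation
`M(a) M(c) = -(a ⬝ c) - M(a × c)`. With `V' = ∑ tₖ sₖ`, the triple product expansion turns both
sides of the identity into `|a|² ⟪V', X ∧ Y⟫ - (a ⬝ t) ⟪σ, X ∧ Y⟫`, and `|a| = |σ| = 1`,
`a ⬝ t = ⟪σ, V'⟫ = 0`.
-/

open scoped RealInnerProductSpace Matrix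

-- The entries `2 ⟪∑ aₖ sₖ, eᵢ ∧ eⱼ⟫`, see `inner_selfDualVec_wedge`.
def selfDualMatrix : (Fin 3 → ℝ) →ₗ[ℝ] Matrix (Fin 4) (Fin 4) ℝ where
  toFun a := !![0, a 0, a 1, a 2; -a 0, 0, a 2, -a 1; -a 1, -a 2, 0, a 0; -a 2, a 1, -a 0, 0]
  map_add' a c := by ext i j; fin_cases i <;> fin_cases j <;> simp [add_comm]
  map_smul' r a := by ext i j; fin_cases i <;> fin_cases j <;> simp

lemma selfDualMatrix_transpose (a : Fin 3 → ℝ) : (selfDualMatrix a)ᵀ = -selfDualMatrix a := by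
  ext i j
  fin_cases i <;> fin_cases j <;> simp [selfDualMatrix]

lemma selfDualMatrix_mul (a c : Fin 3 → ℝ) :
    selfDualMatrix a * selfDualMatrix c = -(a ⬝ᵥ c) • 1 - selfDualMatrix (a ⨯₃ c) := by
  ext i j
  fin_cases i <;> fin_cases j <;>
    simp [selfDualMatrix, Matrix.mul_apply, Fin.sum_univ_four, cross_apply,
      Matrix.vec3_dotProduct] <;>
    ring

lemma selfDualMatrix_mul_cross (a t : Fin 3 → ℝ) :
    selfDualMatrix a * selfDualMatrix (a ⨯₃ t) =
      (a ⬝ᵥ a) • selfDualMatrix t - (a ⬝ᵥ t) • selfDualMatrix a := by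
  rw [selfDualMatrix_mul, dot_self_cross, cross_cross_eq_smul_sub_smul', map_sub, map_smul,
    map_smul]
  simp

lemma selfDualMatrix_cross_mul_transpose (a t : Fin 3 → ℝ) :
    selfDualMatrix (a ⨯₃ t) * (selfDualMatrix a)ᵀ =
      (a ⬝ᵥ a) • selfDualMatrix t - (a ⬝ᵥ t) • selfDualMatrix a := by
  rw [selfDualMatrix_transpose, Matrix.mul_neg, selfDualMatrix_mul, dotProduct_comm,
    dot_self_cross, cross_cross_eq_smul_sub_smul, map_sub, map_smul, map_smul, dotProduct_comm t]
  simp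

lemma cross_sum_smul_frame {M : Type*} [AddCommGroup M] [Module ℝ M] (cross : M →ₗ[ℝ] M →ₗ[ℝ] M)
    (s : Fin 3 → M) (hanti : ∀ i j, cross (s i) (s j) = -cross (s j) (s i))
    (h01 : cross (s 0) (s 1) = s 2) (h12 : cross (s 1) (s 2) = s 0)
    (h20 : cross (s 2) (s 0) = s 1) (a c : Fin 3 → ℝ) :
    cross (∑ i, a i • s i) (∑ i, c i • s i) = ∑ i, (a ⨯₃ c) i • s i := by
  have hself (i : Fin 3) : cross (s i) (s i) = 0 := by
    have h := hanti i i
    rw [eq_neg_iff_add_eq_zero, ← two_smul ℝ] at h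
    exact (smul_eq_zero.mp h).resolve_left two_ne_zero
  simp only [Fin.sum_univ_three, map_add, map_smul, LinearMap.add_apply, LinearMap.smul_apply,
    hself, hanti 1 0, hanti 2 1, hanti 0 2, h01, h12, h20, cross_apply, Matrix.cons_val_zero,
    Matrix.cons_val_one, Matrix.cons_val]
  module

section Bivectors

variable {V L : Type*} [NormedAddCommGroup V] [InnerProductSpace ℝ V]
  [NormedAddCommGroup L] [InnerProductSpace ℝ L] (wedge : V →ₗ[ℝ] V →ₗ[ℝ] L)

def IsGramInner : Prop :=
  ∀ v₁ v₂ v₃ v₄ : V, ⟪wedge v₁ v₂, wedge v₃ v₄⟫ =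
    (1 / 2) * (⟪v₁, v₃⟫ * ⟪v₂, v₄⟫ - ⟪v₁, v₄⟫ * ⟪v₂, v₃⟫)

lemma wedge_swap (wedge_self : ∀ v, wedge v v = 0) (u v : V) : wedge u v = -wedge v u := by
  have h := wedge_self (u + v)
  simp only [map_add, LinearMap.add_apply, wedge_self, zero_add, add_zero] at h
  exact eq_neg_of_add_eq_zero_right h

lemma inner_wedge_orthonormalBasis {ι : Type*} [Fintype ι] [DecidableEq ι]
    (hw : IsGramInner wedge) (b : OrthonormalBasis ι ℝ V) (i j k l : ι) :
    ⟪wedge (b i) (b j), wedge (b k) (b l)⟫ =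
      (1 / 2) * ((if i = k then 1 else 0) * (if j = l then 1 else 0)
        - (if i = l then 1 else 0) * (if j = k then 1 else 0)) := by
  rw [hw]
  simp only [b.inner_eq_ite]

lemma eq_of_forall_inner_wedge_basis {ι : Type*}
    (wedge_span : Submodule.span ℝ {x : L | ∃ u v : V, wedge u v = x} = ⊤)
    (b : Module.Basis ι ℝ V) {x y : L}
    (h : ∀ i j, ⟪x, wedge (b i) (b j)⟫ = ⟪y, wedge (b i) (b j)⟫) : x = y := by
  have hB : wedge.compr₂ (innerₛₗ ℝ x) = wedge.compr₂ (innerₛₗ ℝ y) :=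
    LinearMap.ext_basis b b h
  have hxy : innerₛₗ ℝ x = innerₛₗ ℝ y := by
    refine LinearMap.ext_on wedge_span ?_
    rintro _ ⟨u, v, rfl⟩
    exact congr($hB u v)
  exact ext_inner_right ℝ fun v => congr($hxy v)

variable (b : OrthonormalBasis (Fin 4) ℝ V)

noncomputable def selfDualFrame : Fin 3 → L :=
  ![wedge (b 0) (b 1) + wedge (b 2) (b 3), wedge (b 0) (b 2) + wedge (b 3) (b 1),
    wedge (b 0) (b 3) + wedge (b 1) (b 2)]

noncomputable def selfDualVec (a : Fin 3 → ℝ) : L := ∑ i, a i • selfDualFrame wedge b i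

variable {wedge}

lemma inner_selfDualVec_wedge (hw : IsGramInner wedge) (a : Fin 3 → ℝ) (i j : Fin 4) :
    ⟪selfDualVec wedge b a, wedge (b i) (b j)⟫ = selfDualMatrix a i j / 2 := by
  fin_cases i <;> fin_cases j <;>
    simp [selfDualVec, selfDualFrame, selfDualMatrix, Fin.sum_univ_three, inner_add_left,
      inner_smul_left, inner_wedge_orthonormalBasis wedge hw, -inner_self_eq_norm_sq_to_K] <;>
    ring

lemma inner_selfDualVec (hw : IsGramInner wedge) (a c : Fin 3 → ℝ) :
    ⟪selfDualVec wedge b a, selfDualVec wedge b c⟫ = a ⬝ᵥ c := by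
  nth_rw 2 [selfDualVec]
  simp only [selfDualFrame, Fin.sum_univ_three, Matrix.cons_val_zero, Matrix.cons_val_one,
    Matrix.cons_val, smul_add, inner_add_right, inner_smul_right, inner_selfDualVec_wedge b hw,
    selfDualMatrix, LinearMap.coe_mk, AddHom.coe_mk, Matrix.of_apply, Matrix.cons_val',
    Matrix.cons_val_fin_one, Matrix.vec3_dotProduct]
  ring

lemma eq_sum_inner_wedge (wedge_self : ∀ v, wedge v v = 0)
    (wedge_span : Submodule.span ℝ {x : L | ∃ u v : V, wedge u v = x} = ⊤)
    (hw : IsGramInner wedge) (x : L) :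
    x = (2 * ⟪x, wedge (b 0) (b 1)⟫) • wedge (b 0) (b 1)
      + (2 * ⟪x, wedge (b 0) (b 2)⟫) • wedge (b 0) (b 2)
      + (2 * ⟪x, wedge (b 0) (b 3)⟫) • wedge (b 0) (b 3)
      + (2 * ⟪x, wedge (b 2) (b 3)⟫) • wedge (b 2) (b 3)
      + (2 * ⟪x, wedge (b 3) (b 1)⟫) • wedge (b 3) (b 1)
      + (2 * ⟪x, wedge (b 1) (b 2)⟫) • wedge (b 1) (b 2) := by
  refine eq_of_forall_inner_wedge_basis wedge wedge_span b.toBasis fun i j => ?_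
  fin_cases i <;> fin_cases j <;>
    simp [inner_add_left, inner_smul_left, inner_wedge_orthonormalBasis wedge hw,
      wedge_self, -inner_self_eq_norm_sq_to_K] <;>
    first
      | linarith
      | (rw [wedge_swap wedge wedge_self (b _)]; simp only [inner_neg_right]; linarith)

lemma hodge_selfDualFrame (hodge : L →ₗ[ℝ] L) (hodge_hodge : ∀ x, hodge (hodge x) = x)
    (hodge_b : hodge (wedge (b 0) (b 1)) = wedge (b 2) (b 3) ∧
      hodge (wedge (b 0) (b 2)) = wedge (b 3) (b 1) ∧
      hodge (wedge (b 0) (b 3)) = wedge (b 1) (b 2))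
    (i : Fin 3) : hodge (selfDualFrame wedge b i) = selfDualFrame wedge b i := by
  obtain ⟨h01, h02, h03⟩ := hodge_b
  fin_cases i <;> simp [selfDualFrame, ← h01, ← h02, ← h03, hodge_hodge, add_comm]

lemma exists_selfDualVec_of_hodge_eq_self (wedge_self : ∀ v, wedge v v = 0)
    (wedge_span : Submodule.span ℝ {x : L | ∃ u v : V, wedge u v = x} = ⊤)
    (hw : IsGramInner wedge) (hodge : L →ₗ[ℝ] L) (hodge_hodge : ∀ x, hodge (hodge x) = x)
    (hodge_b : hodge (wedge (b 0) (b 1)) = wedge (b 2) (b 3) ∧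
      hodge (wedge (b 0) (b 2)) = wedge (b 3) (b 1) ∧
      hodge (wedge (b 0) (b 3)) = wedge (b 1) (b 2))
    {z : L} (hz : hodge z = z) : ∃ a, z = selfDualVec wedge b a := by
  obtain ⟨h01, h02, h03⟩ := hodge_b
  have h23 : hodge (wedge (b 2) (b 3)) = wedge (b 0) (b 1) := by rw [← h01, hodge_hodge]
  have h31 : hodge (wedge (b 3) (b 1)) = wedge (b 0) (b 2) := by rw [← h02, hodge_hodge]
  have h12 : hodge (wedge (b 1) (b 2)) = wedge (b 0) (b 3) := by rw [← h03, hodge_hodge]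
  have hexp := eq_sum_inner_wedge b wedge_self wedge_span hw z
  -- `⋆` swaps the coefficients of each `e₀ᵢ` and its dual in the expansion of `z = ⋆z`.
  have hdual := congr(hodge $hexp)
  simp only [hz, map_add, map_smul, h01, h02, h03, h23, h31, h12] at hdual
  obtain ⟨c23, c31, c12⟩ : ⟪z, wedge (b 2) (b 3)⟫ = ⟪z, wedge (b 0) (b 1)⟫ ∧
      ⟪z, wedge (b 3) (b 1)⟫ = ⟪z, wedge (b 0) (b 2)⟫ ∧
      ⟪z, wedge (b 1) (b 2)⟫ = ⟪z, wedge (b 0) (b 3)⟫ := by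
    refine ⟨?_, ?_, ?_⟩ <;> conv_lhs => rw [hdual]
    all_goals
      simp only [inner_add_left, inner_smul_left, Real.ringHom_apply,
        inner_wedge_orthonormalBasis wedge hw, Fin.reduceEq, ↓reduceIte, mul_one, mul_zero,
        sub_zero, sub_self, add_zero, zero_add]
      ring
  refine ⟨![2 * ⟪z, wedge (b 0) (b 1)⟫, 2 * ⟪z, wedge (b 0) (b 2)⟫, 2 * ⟪z, wedge (b 0) (b 3)⟫], ?_⟩
  rw [c23, c31, c12] at hexp
  conv_lhs => rw [hexp]
  simp only [selfDualVec, selfDualFrame, Fin.sum_univ_three, Matrix.cons_val_zero,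
    Matrix.cons_val_one, Matrix.cons_val]
  module

variable {K : V →ₗ[ℝ] V} {a : Fin 3 → ℝ}

lemma apply_basis_eq_sum_selfDualMatrix (hw : IsGramInner wedge)
    (hK : ∀ X Y, ⟪K X, Y⟫ = 2 * ⟪selfDualVec wedge b a, wedge X Y⟫) (j : Fin 4) :
    K (b j) = ∑ k, selfDualMatrix a j k • b k := by
  conv_lhs => rw [← b.sum_repr' (K (b j))]
  refine Finset.sum_congr rfl fun k _ => ?_
  rw [real_inner_comm, hK, inner_selfDualVec_wedge b hw]
  congr 1
  ring

lemma inner_selfDualVec_wedge_apply_right (hw : IsGramInner wedge)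
    (hK : ∀ X Y, ⟪K X, Y⟫ = 2 * ⟪selfDualVec wedge b a, wedge X Y⟫) (c : Fin 3 → ℝ)
    (i j : Fin 4) :
    ⟪selfDualVec wedge b c, wedge (b i) (K (b j))⟫ =
      (selfDualMatrix c * (selfDualMatrix a)ᵀ) i j / 2 := by
  rw [apply_basis_eq_sum_selfDualMatrix b hw hK, Matrix.mul_apply, Finset.sum_div]
  simp only [map_sum, map_smul, inner_sum, inner_smul_right, inner_selfDualVec_wedge b hw,
    Matrix.transpose_apply]
  refine Finset.sum_congr rfl fun k _ => ?_
  ring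

lemma inner_selfDualVec_wedge_apply_left (hw : IsGramInner wedge)
    (hK : ∀ X Y, ⟪K X, Y⟫ = 2 * ⟪selfDualVec wedge b a, wedge X Y⟫) (c : Fin 3 → ℝ)
    (i j : Fin 4) :
    ⟪selfDualVec wedge b c, wedge (K (b i)) (b j)⟫ =
      (selfDualMatrix a * selfDualMatrix c) i j / 2 := by
  rw [apply_basis_eq_sum_selfDualMatrix b hw hK, Matrix.mul_apply, Finset.sum_div]
  simp only [map_sum, map_smul, LinearMap.sum_apply, LinearMap.smul_apply, inner_sum,
    inner_smul_right, inner_selfDualVec_wedge b hw]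
  refine Finset.sum_congr rfl fun k _ => ?_
  ring

lemma inner_selfDualVec_cross_wedge_apply_right (hw : IsGramInner wedge)
    (hK : ∀ X Y, ⟪K X, Y⟫ = 2 * ⟪selfDualVec wedge b a, wedge X Y⟫) (t : Fin 3 → ℝ) (X Y : V) :
    ⟪selfDualVec wedge b (a ⨯₃ t), wedge X (K Y)⟫ =
      (a ⬝ᵥ a) * ⟪selfDualVec wedge b t, wedge X Y⟫
        - (a ⬝ᵥ t) * ⟪selfDualVec wedge b a, wedge X Y⟫ := by
  suffices (wedge.compl₂ K).compr₂ (innerₛₗ ℝ (selfDualVec wedge b (a ⨯₃ t))) =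
      (a ⬝ᵥ a) • wedge.compr₂ (innerₛₗ ℝ (selfDualVec wedge b t))
        - (a ⬝ᵥ t) • wedge.compr₂ (innerₛₗ ℝ (selfDualVec wedge b a)) from congr($this X Y)
  refine LinearMap.ext_basis b.toBasis b.toBasis fun i j => ?_
  simp only [OrthonormalBasis.coe_toBasis, LinearMap.compr₂_apply, LinearMap.compl₂_apply,
    innerₛₗ_apply_apply, inner_selfDualVec_wedge_apply_right b hw hK,
    selfDualMatrix_cross_mul_transpose, Matrix.sub_apply, Matrix.smul_apply, smul_eq_mul,
    LinearMap.sub_apply, LinearMap.smul_apply, inner_selfDualVec_wedge b hw]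
  ring

lemma inner_selfDualVec_cross_wedge_apply_left (hw : IsGramInner wedge)
    (hK : ∀ X Y, ⟪K X, Y⟫ = 2 * ⟪selfDualVec wedge b a, wedge X Y⟫) (t : Fin 3 → ℝ) (X Y : V) :
    ⟪selfDualVec wedge b (a ⨯₃ t), wedge (K X) Y⟫ =
      (a ⬝ᵥ a) * ⟪selfDualVec wedge b t, wedge X Y⟫
        - (a ⬝ᵥ t) * ⟪selfDualVec wedge b a, wedge X Y⟫ := by
  suffices (wedge.comp K).compr₂ (innerₛₗ ℝ (selfDualVec wedge b (a ⨯₃ t))) =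
      (a ⬝ᵥ a) • wedge.compr₂ (innerₛₗ ℝ (selfDualVec wedge b t))
        - (a ⬝ᵥ t) • wedge.compr₂ (innerₛₗ ℝ (selfDualVec wedge b a)) from congr($this X Y)
  refine LinearMap.ext_basis b.toBasis b.toBasis fun i j => ?_
  simp only [OrthonormalBasis.coe_toBasis, LinearMap.compr₂_apply, LinearMap.coe_comp,
    Function.comp_apply, innerₛₗ_apply_apply, inner_selfDualVec_wedge_apply_left b hw hK,
    selfDualMatrix_mul_cross, Matrix.sub_apply, Matrix.smul_apply, smul_eq_mul,
    LinearMap.sub_apply, LinearMap.smul_apply, inner_selfDualVec_wedge b hw]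
  ring

end Bivectors

/-- Let `V` be a 4-dimensional oriented real inner product space, `⋆` the
Hodge star on `Λ²V`, `Λ²₊V` its `(+1)`-eigenspace with the cross product `×` (characterized
on the frames `(s₁,s₂,s₃)` coming from positively oriented orthonormal bases of `V`).
Let `σ ∈ Λ²₊V` be a unit vector and `V′ ∈ Λ²₊V` with `⟨V′,σ⟩ = 0`.  Then for all `X, Y ∈ V`:
`⟨σ×V′, X∧(K_σY)⟩ = ⟨σ×V′, (K_σX)∧Y⟩ = ⟨V′, X∧Y⟩`. -/
theorem stmt_4 {V L : Type*}
    [NormedAddCommGroup V] [InnerProductSpace ℝ V]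
    [NormedAddCommGroup L] [InnerProductSpace ℝ L]
    (h4 : Module.finrank ℝ V = 4)
    (o : Orientation ℝ V (Fin 4))
    (wedge : V →ₗ[ℝ] V →ₗ[ℝ] L)
    (wedge_self : ∀ v : V, wedge v v = 0)
    (wedge_span : Submodule.span ℝ {x : L | ∃ u v : V, wedge u v = x} = ⊤)
    (inner_wedge : ∀ v₁ v₂ v₃ v₄ : V,
      ⟪wedge v₁ v₂, wedge v₃ v₄⟫ =
        (1 / 2) * (⟪v₁, v₃⟫ * ⟪v₂, v₄⟫ - ⟪v₁, v₄⟫ * ⟪v₂, v₃⟫))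
    (hodge : L →ₗ[ℝ] L)
    (hodge_hodge : ∀ x : L, hodge (hodge x) = x)
    (hodge_wedge : ∀ b : OrthonormalBasis (Fin 4) ℝ V, b.toBasis.orientation = o →
      hodge (wedge (b 0) (b 1)) = wedge (b 2) (b 3) ∧
      hodge (wedge (b 0) (b 2)) = wedge (b 3) (b 1) ∧
      hodge (wedge (b 0) (b 3)) = wedge (b 1) (b 2))
    (cross : L →ₗ[ℝ] L →ₗ[ℝ] L)
    (hcross_basis : ∀ b : OrthonormalBasis (Fin 4) ℝ V, b.toBasis.orientation = o →
      cross (wedge (b 0) (b 1) + wedge (b 2) (b 3)) (wedge (b 0) (b 2) + wedge (b 3) (b 1))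
          = wedge (b 0) (b 3) + wedge (b 1) (b 2) ∧
      cross (wedge (b 0) (b 2) + wedge (b 3) (b 1)) (wedge (b 0) (b 3) + wedge (b 1) (b 2))
          = wedge (b 0) (b 1) + wedge (b 2) (b 3) ∧
      cross (wedge (b 0) (b 3) + wedge (b 1) (b 2)) (wedge (b 0) (b 1) + wedge (b 2) (b 3))
          = wedge (b 0) (b 2) + wedge (b 3) (b 1))
    (hcross_antisymm : ∀ x y : L, hodge x = x → hodge y = y → cross x y = -cross y x)
    (σ : L) (hσ : hodge σ = σ) (hσ1 : ‖σ‖ = 1)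
    (V' : L) (hV' : hodge V' = V') (hV'σ : ⟪V', σ⟫ = 0)
    (K : V →ₗ[ℝ] V)
    (hK : ∀ X Y : V, ⟪K X, Y⟫ = 2 * ⟪σ, wedge X Y⟫) :
    ∀ X Y : V,
      ⟪cross σ V', wedge X (K Y)⟫ = ⟪V', wedge X Y⟫ ∧
      ⟪cross σ V', wedge (K X) Y⟫ = ⟪V', wedge X Y⟫ := by
  obtain ⟨b, hb⟩ : ∃ b : OrthonormalBasis (Fin 4) ℝ V, b.toBasis.orientation = o :=
    ⟨o.finOrthonormalBasis (by norm_num) h4, o.finOrthonormalBasis_orientation _ _⟩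
  have hw : IsGramInner wedge := inner_wedge
  obtain ⟨a, rfl⟩ := exists_selfDualVec_of_hodge_eq_self b wedge_self wedge_span hw hodge
    hodge_hodge (hodge_wedge b hb) hσ
  obtain ⟨t, rfl⟩ := exists_selfDualVec_of_hodge_eq_self b wedge_self wedge_span hw hodge
    hodge_hodge (hodge_wedge b hb) hV'
  have ha : a ⬝ᵥ a = 1 := by
    rw [← inner_selfDualVec b hw, real_inner_self_eq_norm_sq, hσ1, one_pow]
  have hat : a ⬝ᵥ t = 0 := by rw [← inner_selfDualVec b hw, real_inner_comm, hV'σ]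
  have hframe := hodge_selfDualFrame b hodge hodge_hodge (hodge_wedge b hb)
  obtain ⟨h01, h12, h20⟩ := hcross_basis b hb
  have hcross : cross (selfDualVec wedge b a) (selfDualVec wedge b t) =
      selfDualVec wedge b (a ⨯₃ t) :=
    cross_sum_smul_frame cross _ (fun i j => hcross_antisymm _ _ (hframe i) (hframe j))
      h01 h12 h20 a t
  intro X Y
  rw [hcross, inner_selfDualVec_cross_wedge_apply_right b hw hK,
    inner_selfDualVec_cross_wedge_apply_left b hw hK, ha, hat]
  simp
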